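/- arXiv:0708.3396 — 2 statements merged into one kernel-verified Lean document; each statement's English description precedes it below -/
import Mathlib

section
/- Let m ≥ 1 and n = 2m+1. The maximum of γ_n + 2∑_{i=1}^{n−1} γ_i, taken over all tuples (γ_1,…,γ_n) of nonnegative reals such that the spectral norm of the n×n symmetric Toeplitz matrix Toeplitz(γ_n,…,γ_1) is at most 1, is attained and equals 2 ∑_{i=0}^{m−1} ξ_i² + ξ_m². (This is the optimal value of the nonnegative adversary bound for ordered search on 2m+1 inputs.) -/
/-- `ξ i = C(2i, i) / 4^i`. -/
noncomputable def xi (i : ℕ) : ℝ := (Nat.choose (2 * i) i : ℝ) / 4 ^ i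

/-- `toeplitz n γ` is the `n×n` symmetric Toeplitz matrix `Toeplitz(γ_n, …, γ_1)` whose
`(i,j)` entry (for `1 ≤ i, j ≤ n`) is `γ_{n − |i−j|}`. -/
def toeplitz (n : ℕ) (γ : ℕ → ℝ) : Matrix (Fin n) (Fin n) ℝ :=
  Matrix.of fun i j => γ (n - (max (i : ℕ) (j : ℕ) - min (i : ℕ) (j : ℕ)))

/-- The spectral norm (largest singular value) of a real matrix, as the operator norm
of its action on Euclidean space. -/
noncomputable def sNorm {n : ℕ} (M : Matrix (Fin n) (Fin n) ℝ) : ℝ :=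
  ‖Matrix.toEuclideanCLM (𝕜 := ℝ) M‖

/-!
Put `r = (ξ_0, ξ_1, …, ξ_m, …, ξ_1, ξ_0)`, so that `‖r‖² = 2 ∑_{i<m} ξ_i² + ξ_m²`.
Since `∑_{i ≤ k} ξ_i ξ_{k-i} = 1`, the weights `ξ_{min(i,j)} ξ_{2m-max(i,j)} ≤ r_i r_j`
sum to one along every diagonal; hence for nonnegative `γ` the objective is at most
`rᵀ T r ≤ ‖T‖ ‖r‖²`. Conversely, dividing by the generating function
`∑ ξ_i xⁱ = (1 - x)^{-1/2}` produces a nonnegative `γ`, supported on the diagonals at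
distance `≥ m`, with `T r = r`. The Schur test gives `‖T‖ ≤ 1`, and on that support the
weights equal `r_i r_j`, so the objective equals `rᵀ T r = ‖r‖²`.
-/

open Finset PowerSeries
open scoped RealInnerProductSpace Matrix

lemma xi_zero : xi 0 = 1 := by simp [xi]

lemma xi_pos (i : ℕ) : 0 < xi i := by
  unfold xi
  have := Nat.choose_pos (show i ≤ 2 * i by omega)
  positivity

lemma two_mul_succ_mul_xi_succ (k : ℕ) :
    2 * (k + 1) * xi (k + 1) = (2 * k + 1) * xi k := by
  have h : ((k : ℝ) + 1) * (k + 1).centralBinom = 2 * (2 * k + 1) * k.centralBinom := by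
    exact_mod_cast Nat.succ_mul_centralBinom_succ k
  simp only [xi, ← Nat.centralBinom_eq_two_mul_choose, pow_succ]
  field_simp
  linear_combination 2 * h

lemma xi_strictAnti : StrictAnti xi :=
  strictAnti_nat_of_succ_lt fun k => by
    nlinarith [two_mul_succ_mul_xi_succ k, xi_pos k, xi_pos (k + 1)]

lemma xi_antitone : Antitone xi := xi_strictAnti.antitone

lemma sum_range_natCast_mul_xi_mul_xi (k : ℕ) :
    ∑ i ∈ range (k + 1), (i : ℝ) * xi i * xi (k - i) =
      k / 2 * ∑ i ∈ range (k + 1), xi i * xi (k - i) := by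
  have reflect : ∑ i ∈ range (k + 1), (i : ℝ) * xi i * xi (k - i) =
      ∑ i ∈ range (k + 1), ((k : ℝ) - i) * xi i * xi (k - i) := by
    rw [← sum_range_reflect]
    refine sum_congr rfl fun i hi => ?_
    have hik : i ≤ k := Nat.lt_succ_iff.mp (mem_range.mp hi)
    rw [show k + 1 - 1 - i = k - i by omega, Nat.sub_sub_self hik, Nat.cast_sub hik]
    ring
  have total : ∑ i ∈ range (k + 1), (i : ℝ) * xi i * xi (k - i) +
      ∑ i ∈ range (k + 1), ((k : ℝ) - i) * xi i * xi (k - i) =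
      k * ∑ i ∈ range (k + 1), xi i * xi (k - i) := by
    rw [← sum_add_distrib, mul_sum]
    exact sum_congr rfl fun _ _ => by ring
  linarith

lemma sum_range_xi_mul_xi (k : ℕ) : ∑ i ∈ range (k + 1), xi i * xi (k - i) = 1 := by
  induction k with
  | zero => simp [xi_zero]
  | succ k ih =>
    -- compare two evaluations of the weighted sum `∑ i ξ_i ξ_{k+1-i}`
    have shift : ∑ i ∈ range (k + 2), (i : ℝ) * xi i * xi (k + 1 - i) =
        ∑ i ∈ range (k + 1), (i : ℝ) * xi i * xi (k - i) + 1 / 2 := by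
      rw [sum_range_succ', ← ih, sum_div, ← sum_add_distrib]
      simp only [Nat.cast_zero, zero_mul, add_zero]
      refine sum_congr rfl fun i _ => ?_
      rw [Nat.add_sub_add_right]
      push_cast
      linear_combination xi (k - i) / 2 * two_mul_succ_mul_xi_succ i
    rw [sum_range_natCast_mul_xi_mul_xi, sum_range_natCast_mul_xi_mul_xi, ih] at shift
    push_cast at shift
    have : (k + 1 : ℝ) ≠ 0 := by positivity
    field_simp at shift
    linarith

namespace PowerSeries

lemma coeff_mul_eq_sum_range {R : Type*} [Semiring R] (φ ψ : R⟦X⟧) (n : ℕ) :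
    coeff n (φ * ψ) = ∑ k ∈ range (n + 1), coeff k φ * coeff (n - k) ψ := by
  rw [coeff_mul,
    Finset.Nat.sum_antidiagonal_eq_sum_range_succ (fun i j => coeff i φ * coeff j ψ)]

lemma coeff_zero_one_sub_X_mul {R : Type*} [Ring R] (φ : R⟦X⟧) :
    coeff 0 ((1 - X) * φ) = coeff 0 φ := by
  simp [sub_mul]

lemma coeff_succ_one_sub_X_mul {R : Type*} [Ring R] (φ : R⟦X⟧) (n : ℕ) :
    coeff (n + 1) ((1 - X) * φ) = coeff (n + 1) φ - coeff n φ := by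
  rw [sub_mul, one_mul, map_sub, coeff_succ_X_mul]

lemma coeff_one_sub_X_mul_nonneg {R : Type*} [Ring R] [PartialOrder R] [IsOrderedRing R]
    {φ : R⟦X⟧} (h0 : 0 ≤ coeff 0 φ) (hφ : Monotone fun n => coeff n φ) (n : ℕ) :
    0 ≤ coeff n ((1 - X) * φ) := by
  cases n with
  | zero => rwa [coeff_zero_one_sub_X_mul]
  | succ n => rw [coeff_succ_one_sub_X_mul, sub_nonneg]; exact hφ n.le_succ

end PowerSeries

noncomputable def xiSeries : ℝ⟦X⟧ := PowerSeries.mk xi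

@[simp] lemma coeff_xiSeries (n : ℕ) : coeff n xiSeries = xi n := coeff_mk _ _

lemma xiSeries_mul_self : xiSeries * xiSeries = PowerSeries.mk 1 := by
  ext k
  simp only [coeff_mul_eq_sum_range, coeff_xiSeries, coeff_mk, Pi.one_apply]
  exact sum_range_xi_mul_xi k

lemma one_sub_X_mul_xiSeries_mul_xiSeries : (1 - X) * xiSeries * xiSeries = 1 := by
  rw [mul_assoc, xiSeries_mul_self, mul_comm, mk_one_mul_one_sub_eq_one]

/-- Row `m - t` of `T r = r`, with the corner entry `ξ_m / 2` of row `m` moved to the right. -/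
noncomputable def rowTarget (m : ℕ) : ℝ⟦X⟧ :=
  PowerSeries.mk (fun l => xi (m - l)) - C (xi m / 2)

lemma coeff_rowTarget (m l : ℕ) :
    coeff l (rowTarget m) = xi (m - l) - if l = 0 then xi m / 2 else 0 := by
  simp [rowTarget, coeff_C]

lemma monotone_coeff_rowTarget (m : ℕ) : Monotone fun l => coeff l (rowTarget m) := by
  refine monotone_nat_of_le_succ fun l => ?_
  simp only [coeff_rowTarget, Nat.succ_ne_zero, if_false, sub_zero]
  split_ifs with hl
  · subst hl
    simp only [Nat.sub_zero, zero_add]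
    linarith [xi_pos m, xi_antitone (Nat.sub_le m 1)]
  · exact sub_nonneg.mp (by linarith [xi_antitone (show m - (l + 1) ≤ m - l by omega)])

/-- `1 / ξ(x) = (1 - x) ξ(x)`, so this is `rowTarget m / ξ(x)`. -/
noncomputable def kernelSeries (m : ℕ) : ℝ⟦X⟧ := xiSeries * ((1 - X) * rowTarget m)

lemma kernelSeries_mul_xiSeries (m : ℕ) : kernelSeries m * xiSeries = rowTarget m := by
  unfold kernelSeries
  linear_combination rowTarget m * one_sub_X_mul_xiSeries_mul_xiSeries

lemma coeff_kernelSeries_nonneg (m k : ℕ) : 0 ≤ coeff k (kernelSeries m) := by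
  rw [kernelSeries, coeff_mul_eq_sum_range]
  refine sum_nonneg fun j _ => mul_nonneg ((coeff_xiSeries j).symm ▸ (xi_pos j).le) ?_
  refine coeff_one_sub_X_mul_nonneg ?_ (monotone_coeff_rowTarget m) _
  rw [coeff_rowTarget, if_pos rfl, Nat.sub_zero]
  linarith [xi_pos m]

lemma sum_range_coeff_kernelSeries_mul_xi (m t : ℕ) :
    ∑ k ∈ range (t + 1), coeff k (kernelSeries m) * xi (t - k) =
      xi (m - t) - if t = 0 then xi m / 2 else 0 := by
  rw [← coeff_rowTarget, ← kernelSeries_mul_xiSeries, coeff_mul_eq_sum_range]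
  simp only [coeff_xiSeries]

lemma coeff_zero_kernelSeries (m : ℕ) : coeff 0 (kernelSeries m) = xi m / 2 := by
  have h := sum_range_coeff_kernelSeries_mul_xi m 0
  simp only [zero_add, sum_range_one, Nat.sub_zero, xi_zero, mul_one, if_true] at h
  linarith

namespace Matrix

variable {ι : Type*} [Fintype ι]

lemma sq_mulVec_apply_le {M : Matrix ι ι ℝ} (hM : ∀ i j, 0 ≤ M i j) {r : ι → ℝ}
    (hr : ∀ i, 0 < r i) (x : ι → ℝ) (i : ι) :
    (M *ᵥ x) i ^ 2 ≤ (M *ᵥ r) i * ∑ j, M i j * x j ^ 2 / r j := by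
  simp only [mulVec, dotProduct]
  refine sum_sq_le_sum_mul_sum_of_sq_le_mul _ (fun j _ => mul_nonneg (hM i j) (hr j).le)
    (fun j _ => div_nonneg (mul_nonneg (hM i j) (sq_nonneg _)) (hr j).le) fun j _ => ?_
  exact le_of_eq (by field_simp [(hr j).ne'])

variable [DecidableEq ι]

/-- **Schur test**. -/
theorem norm_toEuclideanCLM_le_of_mulVec_le {M : Matrix ι ι ℝ} (hM : ∀ i j, 0 ≤ M i j)
    {r : ι → ℝ} (hr : ∀ i, 0 < r i) {c : ℝ} (hc : 0 ≤ c)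
    (hrow : ∀ i, (M *ᵥ r) i ≤ c * r i) (hcol : ∀ j, (Mᵀ *ᵥ r) j ≤ c * r j) :
    ‖toEuclideanCLM (𝕜 := ℝ) M‖ ≤ c := by
  refine ContinuousLinearMap.opNorm_le_bound _ hc fun x => ?_
  rw [← pow_le_pow_iff_left₀ (norm_nonneg _) (by positivity) two_ne_zero, mul_pow,
    EuclideanSpace.real_norm_sq_eq, EuclideanSpace.real_norm_sq_eq]
  set v := x.ofLp
  have hweight : ∀ j, 0 ≤ v j ^ 2 / r j := fun j => div_nonneg (sq_nonneg _) (hr j).le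
  calc ∑ i, (M *ᵥ v) i ^ 2
      ≤ ∑ i, c * r i * ∑ j, M i j * v j ^ 2 / r j :=
        sum_le_sum fun i _ => (sq_mulVec_apply_le hM hr v i).trans <|
          mul_le_mul_of_nonneg_right (hrow i) <|
            sum_nonneg fun j _ => div_nonneg (mul_nonneg (hM i j) (sq_nonneg _)) (hr j).le
    _ = c * ∑ j, v j ^ 2 / r j * (Mᵀ *ᵥ r) j := by
        simp only [mulVec, dotProduct, transpose_apply, mul_sum]
        rw [sum_comm]
        exact sum_congr rfl fun j _ => sum_congr rfl fun i _ => by ring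
    _ ≤ c * ∑ j, v j ^ 2 / r j * (c * r j) := by
        gcongr with j
        exacts [hweight j, hcol j]
    _ = c ^ 2 * ∑ j, v j ^ 2 := by
        rw [mul_sum, mul_sum]
        exact sum_congr rfl fun j _ => by field_simp [(hr j).ne']

lemma dotProduct_mulVec_le_norm_toEuclideanCLM_mul (M : Matrix ι ι ℝ) (v : ι → ℝ) :
    v ⬝ᵥ M *ᵥ v ≤ ‖toEuclideanCLM (𝕜 := ℝ) M‖ * ∑ i, v i ^ 2 := by
  set x : EuclideanSpace ℝ ι := WithLp.toLp 2 v
  rw [← inner_toEuclideanCLM M x x]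
  calc ⟪x, toEuclideanCLM (𝕜 := ℝ) M x⟫
      ≤ ‖x‖ * (‖toEuclideanCLM (𝕜 := ℝ) M‖ * ‖x‖) :=
        (real_inner_le_norm _ _).trans <|
          mul_le_mul_of_nonneg_left ((toEuclideanCLM (𝕜 := ℝ) M).le_opNorm x) (norm_nonneg x)
    _ = ‖toEuclideanCLM (𝕜 := ℝ) M‖ * ∑ i, v i ^ 2 := by
        rw [← EuclideanSpace.real_norm_sq_eq x]
        ring

end Matrix

lemma sum_range_sum_range_eq_diag_add_upper {M : Type*} [AddCommMonoid M] (g : ℕ → ℕ → M)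
    (hg : ∀ i j, g i j = g j i) (n : ℕ) :
    ∑ i ∈ range n, ∑ j ∈ range n, g i j =
      ∑ i ∈ range n, g i i + 2 • ∑ j ∈ range n, ∑ i ∈ range j, g i j := by
  induction n with
  | zero => simp
  | succ n ih =>
    have hrow : ∑ j ∈ range n, g n j = ∑ i ∈ range n, g i n := sum_congr rfl fun j _ => hg n j
    simp only [sum_range_succ, sum_add_distrib, ih, hrow, smul_add, two_nsmul]
    abel

lemma sum_range_sum_range_lt_eq_sum_diagonals {M : Type*} [AddCommMonoid M] (g : ℕ → ℕ → M)
    (n : ℕ) :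
    ∑ j ∈ range n, ∑ i ∈ range j, g i j =
      ∑ s ∈ Icc 1 (n - 1), ∑ i ∈ range s, g i (i + n - s) := by
  rw [sum_sigma', sum_sigma']
  refine sum_nbij' (fun x => ⟨n + x.2 - x.1, x.2⟩) (fun y => ⟨y.2 + n - y.1, y.2⟩)
    ?_ ?_ ?_ ?_ ?_ <;> rintro ⟨a, b⟩ h <;> simp only [mem_sigma, mem_range, mem_Icc] at h ⊢
  · omega
  · omega
  · exact Sigma.ext (by dsimp only; omega) HEq.rfl
  · exact Sigma.ext (by dsimp only; omega) HEq.rfl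
  · congr 1; omega

/-- Each diagonal of the weights `ξ_{min(i,j)} ξ_{N-max(i,j)}` sums to one. -/
lemma sum_xi_mul_xi_mul_toeplitz (N : ℕ) (γ : ℕ → ℝ) :
    ∑ i ∈ range (N + 1), ∑ j ∈ range (N + 1),
        xi (min i j) * xi (N - max i j) * γ (N + 1 - (max i j - min i j)) =
      γ (N + 1) + 2 * ∑ s ∈ Icc 1 N, γ s := by
  rw [sum_range_sum_range_eq_diag_add_upper _ (fun i j => by rw [min_comm, max_comm]),
    sum_range_sum_range_lt_eq_sum_diagonals, nsmul_eq_mul, Nat.cast_ofNat, Nat.add_sub_cancel]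
  congr 1
  · simp only [min_self, max_self, Nat.sub_self, Nat.sub_zero, ← sum_mul]
    rw [sum_range_xi_mul_xi, one_mul]
  · refine congrArg (2 * ·) (sum_congr rfl fun s hs => ?_)
    have hs : 1 ≤ s ∧ s ≤ N := mem_Icc.mp hs
    calc ∑ i ∈ range s, xi (min i (i + (N + 1) - s)) * xi (N - max i (i + (N + 1) - s)) *
          γ (N + 1 - (max i (i + (N + 1) - s) - min i (i + (N + 1) - s)))
        = ∑ i ∈ range (s - 1 + 1), xi i * xi (s - 1 - i) * γ s := by
          rw [Nat.sub_add_cancel hs.1]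
          refine sum_congr rfl fun i hi => ?_
          have hi := mem_range.mp hi
          rw [min_eq_left (by omega), max_eq_right (by omega),
            show N - (i + (N + 1) - s) = s - 1 - i by omega,
            show N + 1 - (i + (N + 1) - s - i) = s by omega]
      _ = γ s := by rw [← sum_mul, sum_range_xi_mul_xi, one_mul]

noncomputable def xiPal (N i : ℕ) : ℝ := xi (min i (N - i))

lemma xiPal_pos (N i : ℕ) : 0 < xiPal N i := xi_pos _

lemma xiPal_sub (N i : ℕ) (h : i ≤ N) : xiPal N (N - i) = xiPal N i := by
  rw [xiPal, xiPal, Nat.sub_sub_self h, min_comm]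

lemma xi_min_mul_xi_sub_max_le (N i j : ℕ) :
    xi (min i j) * xi (N - max i j) ≤ xiPal N i * xiPal N j := by
  wlog hij : i ≤ j generalizing i j
  · rw [min_comm, max_comm, mul_comm (xiPal N i)]
    exact this j i (by omega)
  rw [min_eq_left hij, max_eq_right hij]
  exact mul_le_mul (xi_antitone (min_le_left _ _)) (xi_antitone (min_le_right _ _))
    (xi_pos _).le (xi_pos _).le

lemma xiPal_mul_xiPal_of_le_dist (m i j : ℕ) (hi : i ≤ 2 * m) (hj : j ≤ 2 * m)
    (hd : m ≤ max i j - min i j) :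
    xiPal (2 * m) i * xiPal (2 * m) j = xi (min i j) * xi (2 * m - max i j) := by
  wlog hij : i ≤ j generalizing i j
  · rw [min_comm, max_comm, mul_comm]
    exact this j i hj hi (by omega) (by omega)
  rw [min_eq_left hij, max_eq_right hij, xiPal, xiPal, min_eq_left (by omega),
    min_eq_right (by omega)]

lemma sum_range_xiPal_sq (m : ℕ) :
    ∑ i ∈ range (2 * m + 1), xiPal (2 * m) i ^ 2 =
      2 * ∑ i ∈ range m, xi i ^ 2 + xi m ^ 2 := by
  have left : ∀ i ≤ m, xiPal (2 * m) i = xi i := fun i hi => by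
    rw [xiPal, min_eq_left (by omega)]
  have right : ∑ k ∈ range m, xiPal (2 * m) (m + 1 + k) ^ 2 = ∑ k ∈ range m, xi k ^ 2 := by
    rw [← sum_range_reflect]
    refine sum_congr rfl fun k hk => ?_
    have hk := mem_range.mp hk
    rw [xiPal, min_eq_right (by omega), show 2 * m - (m + 1 + (m - 1 - k)) = k by omega]
  rw [show 2 * m + 1 = (m + 1) + m by ring, sum_range_add, sum_range_succ, right, left m le_rfl,
    sum_congr rfl fun i hi => by rw [left i (mem_range.mp hi).le]]
  ring

lemma toeplitz_transpose (n : ℕ) (γ : ℕ → ℝ) : (toeplitz n γ)ᵀ = toeplitz n γ := by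
  ext i j
  simp only [Matrix.transpose_apply, toeplitz, Matrix.of_apply, max_comm, min_comm]

lemma toeplitz_mulVec_apply (n : ℕ) (γ v : ℕ → ℝ) (i : Fin n) :
    (toeplitz n γ *ᵥ fun j => v j) i =
      ∑ j ∈ range n, γ (n - (max (i : ℕ) j - min (i : ℕ) j)) * v j :=
  Fin.sum_univ_eq_sum_range (fun j => γ (n - (max (i : ℕ) j - min (i : ℕ) j)) * v j) n

lemma dotProduct_toeplitz_mulVec (n : ℕ) (γ u v : ℕ → ℝ) :
    (fun i : Fin n => u i) ⬝ᵥ toeplitz n γ *ᵥ (fun j => v j) =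
      ∑ i ∈ range n, ∑ j ∈ range n, u i * v j * γ (n - (max i j - min i j)) := by
  simp only [dotProduct, toeplitz_mulVec_apply, mul_sum]
  rw [Fin.sum_univ_eq_sum_range (fun i => ∑ j ∈ range n,
    u i * (γ (n - (max i j - min i j)) * v j)) n]
  exact sum_congr rfl fun i _ => sum_congr rfl fun j _ => by ring

theorem adversary_objective_le (N : ℕ) (γ : ℕ → ℝ) (hγ : ∀ i, 1 ≤ i → i ≤ N + 1 → 0 ≤ γ i) :
    γ (N + 1) + 2 * ∑ s ∈ Icc 1 N, γ s ≤
      sNorm (toeplitz (N + 1) γ) * ∑ i ∈ range (N + 1), xiPal N i ^ 2 := by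
  rw [← sum_xi_mul_xi_mul_toeplitz]
  calc _ ≤ ∑ i ∈ range (N + 1), ∑ j ∈ range (N + 1),
          xiPal N i * xiPal N j * γ (N + 1 - (max i j - min i j)) := by
        refine sum_le_sum fun i hi => sum_le_sum fun j hj => ?_
        have hi := mem_range.mp hi
        have hj := mem_range.mp hj
        exact mul_le_mul_of_nonneg_right (xi_min_mul_xi_sub_max_le N i j)
          (hγ _ (by omega) (by omega))
    _ = (fun i : Fin (N + 1) => xiPal N i) ⬝ᵥ toeplitz (N + 1) γ *ᵥ (fun j => xiPal N j) :=
        (dotProduct_toeplitz_mulVec _ _ _ _).symm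
    _ ≤ _ := by
        rw [sNorm, ← Fin.sum_univ_eq_sum_range (fun i => xiPal N i ^ 2)]
        exact Matrix.dotProduct_mulVec_le_norm_toEuclideanCLM_mul _ _

lemma sum_toeplitzRow_reflect (N : ℕ) (γ v : ℕ → ℝ) (hv : ∀ j ≤ N, v (N - j) = v j)
    (i : ℕ) (hi : i ≤ N) :
    ∑ j ∈ range (N + 1), γ (N + 1 - (max (N - i) j - min (N - i) j)) * v j =
      ∑ j ∈ range (N + 1), γ (N + 1 - (max i j - min i j)) * v j := by
  rw [← sum_range_reflect]
  refine sum_congr rfl fun j hj => ?_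
  have hj := mem_range.mp hj
  rw [show N + 1 - 1 - j = N - j by omega, hv j (by omega),
    show max (N - i) (N - j) - min (N - i) (N - j) = max i j - min i j by omega]

/-- The extremal `γ`: the Toeplitz entry at distance `d ≥ m` from the diagonal is the
`(d - m)`-th coefficient of `kernelSeries m`, all nearer entries vanish. -/
noncomputable def witness (m s : ℕ) : ℝ :=
  if s ≤ m + 1 then coeff (m + 1 - s) (kernelSeries m) else 0

lemma witness_nonneg (m s : ℕ) : 0 ≤ witness m s := by
  unfold witness
  split_ifs
  exacts [coeff_kernelSeries_nonneg _ _, le_rfl]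

lemma witness_two_mul_add_one_sub (m d : ℕ) (hd : d ≤ 2 * m) :
    witness m (2 * m + 1 - d) = if m ≤ d then coeff (d - m) (kernelSeries m) else 0 := by
  unfold witness
  split_ifs <;> first | omega | rfl | (congr 2; omega)

lemma sum_witness_mul_xiPal_of_le (m : ℕ) (hm : 1 ≤ m) (i : ℕ) (hi : i ≤ m) :
    ∑ j ∈ range (2 * m + 1), witness m (2 * m + 1 - (max i j - min i j)) * xiPal (2 * m) j =
      xi i := by
  rw [show range (2 * m + 1) = range (i + m + (m - i + 1)) by congr 1; omega, sum_range_add]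
  -- only the corner entry `(m, 0)` of the near block is nonzero
  have near : ∑ j ∈ range (i + m),
      witness m (2 * m + 1 - (max i j - min i j)) * xiPal (2 * m) j =
        if i = m then xi m / 2 else 0 := by
    rw [sum_eq_single_of_mem 0 (mem_range.mpr (by omega))]
    · rw [show max i 0 - min i 0 = i by omega, witness_two_mul_add_one_sub m i (by omega),
        xiPal, min_eq_left (Nat.zero_le _), xi_zero, mul_one]
      obtain rfl | hlt := eq_or_lt_of_le hi
      · rw [if_pos le_rfl, if_pos rfl, Nat.sub_self, coeff_zero_kernelSeries]
      · rw [if_neg (by omega), if_neg hlt.ne]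
    · intro j hj hj0
      have hj := mem_range.mp hj
      rw [witness_two_mul_add_one_sub m _ (by omega), if_neg (by omega), zero_mul]
  have far : ∑ k ∈ range (m - i + 1),
      witness m (2 * m + 1 - (max i (i + m + k) - min i (i + m + k))) *
        xiPal (2 * m) (i + m + k) =
        xi i - if i = m then xi m / 2 else 0 := by
    have h := sum_range_coeff_kernelSeries_mul_xi m (m - i)
    rw [Nat.sub_sub_self hi] at h
    simp only [show m - i = 0 ↔ i = m by omega] at h
    rw [← h]
    refine sum_congr rfl fun k hk => ?_
    have hk := mem_range.mp hk
    rw [show max i (i + m + k) - min i (i + m + k) = m + k by omega,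
      witness_two_mul_add_one_sub m _ (by omega), if_pos (by omega), Nat.add_sub_cancel_left,
      xiPal, min_eq_right (by omega), show 2 * m - (i + m + k) = m - i - k by omega]
  rw [near, far]
  ring

lemma toeplitz_witness_mulVec_xiPal (m : ℕ) (hm : 1 ≤ m) (i : Fin (2 * m + 1)) :
    (toeplitz (2 * m + 1) (witness m) *ᵥ fun j => xiPal (2 * m) j) i = xiPal (2 * m) i := by
  have hi := i.is_lt
  rw [toeplitz_mulVec_apply]
  rcases le_or_gt (i : ℕ) m with him | him
  · rw [sum_witness_mul_xiPal_of_le m hm i him, xiPal, min_eq_left (by omega)]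
  · have h := sum_toeplitzRow_reflect (2 * m) (witness m) (xiPal (2 * m)) (xiPal_sub _)
      (2 * m - i) (by omega)
    rw [Nat.sub_sub_self (by omega)] at h
    rw [h, sum_witness_mul_xiPal_of_le m hm _ (by omega), xiPal, min_eq_right (by omega)]

lemma sNorm_toeplitz_witness_le_one (m : ℕ) (hm : 1 ≤ m) :
    sNorm (toeplitz (2 * m + 1) (witness m)) ≤ 1 := by
  have hrow : ∀ i, (toeplitz (2 * m + 1) (witness m) *ᵥ fun j => xiPal (2 * m) j) i ≤
      1 * xiPal (2 * m) i := fun i => by rw [toeplitz_witness_mulVec_xiPal m hm, one_mul]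
  exact Matrix.norm_toEuclideanCLM_le_of_mulVec_le (M := toeplitz (2 * m + 1) (witness m))
    (fun _ _ => witness_nonneg _ _) (fun j => xiPal_pos (2 * m) j) zero_le_one hrow
    (by rwa [toeplitz_transpose])

lemma adversary_objective_witness (m : ℕ) (hm : 1 ≤ m) :
    witness m (2 * m + 1) + 2 * ∑ s ∈ Icc 1 (2 * m), witness m s =
      ∑ i ∈ range (2 * m + 1), xiPal (2 * m) i ^ 2 := by
  rw [← sum_xi_mul_xi_mul_toeplitz]
  calc _ = ∑ i ∈ range (2 * m + 1), ∑ j ∈ range (2 * m + 1),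
          xiPal (2 * m) i * xiPal (2 * m) j * witness m (2 * m + 1 - (max i j - min i j)) := by
        refine sum_congr rfl fun i hi => sum_congr rfl fun j hj => ?_
        have hi := mem_range.mp hi
        have hj := mem_range.mp hj
        rw [witness_two_mul_add_one_sub m _ (by omega)]
        split_ifs with hd
        · rw [xiPal_mul_xiPal_of_le_dist m i j (by omega) (by omega) hd]
        · simp only [mul_zero]
    _ = ∑ i : Fin (2 * m + 1), xiPal (2 * m) i *
          (toeplitz (2 * m + 1) (witness m) *ᵥ fun j => xiPal (2 * m) j) i :=
        (dotProduct_toeplitz_mulVec _ _ _ _).symm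
    _ = _ := by
        simp only [toeplitz_witness_mulVec_xiPal m hm, ← sq]
        exact Fin.sum_univ_eq_sum_range (fun i => xiPal (2 * m) i ^ 2) _

/-- Let `m ≥ 1` and `n = 2m+1`.  The maximum of `γ_n + 2 ∑_{i=1}^{n−1} γ_i` over all tuples
`(γ_1, …, γ_n)` of nonnegative reals with `‖Toeplitz(γ_n, …, γ_1)‖ ≤ 1` is attained and
equals `2 ∑_{i=0}^{m−1} ξ_i² + ξ_m²`. -/
theorem adversary_odd (m : ℕ) (hm : 1 ≤ m) :
    IsGreatest
      {x : ℝ | ∃ γ : ℕ → ℝ,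
        (∀ i, 1 ≤ i → i ≤ 2 * m + 1 → 0 ≤ γ i) ∧
        sNorm (toeplitz (2 * m + 1) γ) ≤ 1 ∧
        x = γ (2 * m + 1) + 2 * ∑ i ∈ Finset.Icc 1 (2 * m + 1 - 1), γ i}
      (2 * ∑ i ∈ Finset.range m, (xi i) ^ 2 + (xi m) ^ 2) := by
  rw [Nat.add_sub_cancel, ← sum_range_xiPal_sq]
  refine ⟨⟨witness m, fun i _ _ => witness_nonneg m i, sNorm_toeplitz_witness_le_one m hm,
    (adversary_objective_witness m hm).symm⟩, ?_⟩
  rintro _ ⟨γ, hγ, hnorm, rfl⟩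
  calc _ ≤ sNorm (toeplitz (2 * m + 1) γ) * ∑ i ∈ range (2 * m + 1), xiPal (2 * m) i ^ 2 :=
        adversary_objective_le (2 * m) γ hγ
    _ ≤ _ := mul_le_of_le_one_left (sum_nonneg fun _ _ => sq_nonneg _) hnorm
end

section
/- H{ø}yer–Neerbek–Shi weight scheme feasibility: let n ≥ 2 and define γ_i := 1/(π i) for 1 ≤ i ≤ ⌊n/2⌋ and γ_i := 0 for ⌊n/2⌋ < i ≤ n. Then the spectral norm of the n×n symmetric Toeplitz matrix Toeplitz(γ_n,…,γ_1) is at most 1; consequently (2/π)·∑_{i=1}^{⌊n/2⌋} 1/i is a valid value of the adversary objective γ_n + 2∑_{i=1}^{n−1} γ_i under the constraint that this spectral norm be at most 1. -/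
/-! Entry `(i, j)` is nonzero only when `|i - j| ≥ ⌈n/2⌉`, and then it equals
`1 / (π (p + q + 1))` with `p`, `q` the distances of `i`, `j` to opposite ends of `0, …, n-1`.
So up to reversing columns the matrix is a zero-padded section of the Hilbert matrix
`(1 / (π (p + q + 1)))`, and Hilbert's inequality bounds its norm by `1`. We prove this with the
Schur test, using the weight `(p + 1/2)^(-1/2)`: the resulting row sums
`∑_q 1 / ((p + 1/2 + q + 1/2) √(q + 1/2))` are compared term by term with
`∫_0^∞ dx / ((p + 1/2 + x) √x) = π / √(p + 1/2)`, via the primitive `2/√a · arctan √(x/a)`. -/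

open Real Finset Matrix

section Schur

variable {ι : Type*} [Fintype ι]

theorem Matrix.sum_sq_mulVec_le_of_schur {K : Matrix ι ι ℝ} (hK : K.IsSymm)
    (hK₀ : ∀ i j, 0 ≤ K i j) {w : ι → ℝ} (hw : ∀ i, 0 < w i) {c : ℝ} (hc : 0 ≤ c)
    (hKw : ∀ i, ∑ j, K i j * w j ≤ c * w i) (v : ι → ℝ) :
    ∑ i, (K *ᵥ v) i ^ 2 ≤ c ^ 2 * ∑ i, v i ^ 2 := by
  have cauchySchwarz : ∀ i, (K *ᵥ v) i ^ 2 ≤ (∑ j, K i j * w j) * ∑ j, K i j * (v j ^ 2 / w j) :=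
    fun i => sum_sq_le_sum_mul_sum_of_sq_le_mul _
      (fun j _ => mul_nonneg (hK₀ i j) (hw j).le)
      (fun j _ => mul_nonneg (hK₀ i j) (div_nonneg (sq_nonneg _) (hw j).le))
      (fun j _ => by field_simp [(hw j).ne']; exact le_rfl)
  calc ∑ i, (K *ᵥ v) i ^ 2
      ≤ ∑ i, c * w i * ∑ j, K i j * (v j ^ 2 / w j) := by
        gcongr with i
        exact (cauchySchwarz i).trans (mul_le_mul_of_nonneg_right (hKw i)
          (sum_nonneg fun j _ => mul_nonneg (hK₀ i j) (div_nonneg (sq_nonneg _) (hw j).le)))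
    _ = c * ∑ j, v j ^ 2 / w j * ∑ i, K j i * w i := by
        simp only [mul_sum]
        rw [sum_comm]
        refine sum_congr rfl fun j _ => sum_congr rfl fun i _ => ?_
        rw [hK.apply]
        ring
    _ ≤ c * ∑ j, v j ^ 2 / w j * (c * w j) := by
        gcongr with j
        · exact div_nonneg (sq_nonneg _) (hw j).le
        · exact hKw j
    _ = c ^ 2 * ∑ i, v i ^ 2 := by
        rw [mul_sum, mul_sum]
        refine sum_congr rfl fun j _ => ?_
        field_simp [(hw j).ne']

theorem Matrix.norm_toEuclideanCLM_le_of_schur [DecidableEq ι] {K : Matrix ι ι ℝ} (hK : K.IsSymm)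
    (hK₀ : ∀ i j, 0 ≤ K i j) {w : ι → ℝ} (hw : ∀ i, 0 < w i) {c : ℝ} (hc : 0 ≤ c)
    (hKw : ∀ i, ∑ j, K i j * w j ≤ c * w i) :
    ‖Matrix.toEuclideanCLM (𝕜 := ℝ) K‖ ≤ c := by
  refine ContinuousLinearMap.opNorm_le_bound _ hc fun v => ?_
  rw [← pow_le_pow_iff_left₀ (norm_nonneg _) (by positivity) two_ne_zero, mul_pow,
    EuclideanSpace.real_norm_sq_eq, EuclideanSpace.real_norm_sq_eq]
  exact sum_sq_mulVec_le_of_schur hK hK₀ hw hc hKw v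

end Schur

section Hilbert

variable {a : ℝ}

theorem hasDerivAt_arctan_sqrt_div_sqrt (ha : 0 < a) {x : ℝ} (hx : 0 < x) :
    HasDerivAt (fun y => 2 / √a * arctan (√y / √a)) (1 / ((a + x) * √x)) x := by
  refine ((((hasDerivAt_sqrt hx.ne').div_const √a).arctan).const_mul (2 / √a)).congr_deriv ?_
  rw [div_pow, sq_sqrt ha.le, sq_sqrt hx.le]
  field_simp
  rw [sq_sqrt ha.le]

theorem one_div_half_add_mul_sqrt_half_le (ha : 0 < a) :
    1 / ((a + 1 / 2) * √(1 / 2)) ≤ 2 / √a * arctan (√(1 / 2) / √a) := by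
  set u := √(1 / 2) / √a with hu_def
  have hu : 0 < u := by positivity
  -- `sin (2 arctan u) = 2u / (1 + u²)`, and `sin θ ≤ θ`
  have key : 2 * u / (1 + u ^ 2) ≤ 2 * arctan u := by
    have h := sin_le (mul_nonneg zero_le_two (arctan_nonneg.2 hu.le))
    rwa [sin_two_mul, sin_arctan, cos_arctan, mul_assoc, mul_one_div, div_div,
      mul_self_sqrt (by positivity), ← mul_div_assoc] at h
  calc 1 / ((a + 1 / 2) * √(1 / 2)) = 1 / √a * (2 * u / (1 + u ^ 2)) := by
        have : √(1 / 2 : ℝ) ^ 2 = 1 / 2 := sq_sqrt (by norm_num)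
        rw [hu_def, div_pow, sq_sqrt ha.le, this]
        field_simp
        rw [sq_sqrt ha.le, this]
        ring
    _ ≤ 1 / √a * (2 * arctan u) := by gcongr
    _ = 2 / √a * arctan u := by ring

theorem one_div_add_mul_sqrt_le_sub (ha : 0 < a) {x : ℝ} (hx : 1 ≤ x) :
    1 / ((a + x) * √x) ≤ 2 / √a * arctan (√x / √a) - 2 / √a * arctan (√(x - 1) / √a) := by
  have h := (convex_Icc (x - 1) x).mul_sub_le_image_sub_of_le_deriv
    (f := fun y => 2 / √a * arctan (√y / √a)) (C := 1 / ((a + x) * √x))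
    (Continuous.continuousOn (by fun_prop))
    (fun y hy => by
      rw [interior_Icc] at hy
      exact (hasDerivAt_arctan_sqrt_div_sqrt ha (by linarith [hy.1])).differentiableAt
        |>.differentiableWithinAt)
    (fun y hy => by
      rw [interior_Icc] at hy
      have hy₀ : 0 < y := by linarith [hy.1]
      rw [(hasDerivAt_arctan_sqrt_div_sqrt ha hy₀).deriv]
      gcongr <;> exact hy.2.le)
    (x - 1) (by simp) x (by simp) (by linarith)
  simpa using h

theorem sum_range_one_div_add_mul_sqrt_le (ha : 0 < a) (N : ℕ) :
    ∑ k ∈ range N, 1 / ((a + (k + 1 / 2)) * √(k + 1 / 2)) ≤ π / √a := by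
  set G : ℕ → ℝ := fun k => 2 / √a * arctan (√(k - 1 / 2) / √a) with hG
  -- `√(-1/2) = 0` makes `G 0 = 0`
  have hG₀ : G 0 = 0 := by simp [hG, sqrt_eq_zero'.2 (by norm_num : (-2⁻¹ : ℝ) ≤ 0)]
  have step : ∀ k : ℕ, 1 / ((a + (k + 1 / 2)) * √(k + 1 / 2)) ≤ G (k + 1) - G k := by
    intro k
    rcases Nat.eq_zero_or_pos k with rfl | hk
    · have hG₁ : G 1 = 2 / √a * arctan (√(1 / 2) / √a) := by norm_num [hG]
      simpa [hG₀, hG₁] using one_div_half_add_mul_sqrt_half_le ha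
    · have := one_div_add_mul_sqrt_le_sub ha (x := k + 1 / 2) (by
        have : (1 : ℝ) ≤ k := by exact_mod_cast hk
        linarith)
      convert this using 4 <;> push_cast <;> ring_nf
  calc ∑ k ∈ range N, 1 / ((a + (k + 1 / 2)) * √(k + 1 / 2))
      ≤ ∑ k ∈ range N, (G (k + 1) - G k) := sum_le_sum fun k _ => step k
    _ = G N := by rw [sum_range_sub, hG₀, sub_zero]
    _ ≤ 2 / √a * (π / 2) := by
        simp only [hG]
        gcongr
        exact (arctan_lt_pi_div_two _).le
    _ = π / √a := by ring

end Hilbert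

theorem toeplitz_isSymm (n : ℕ) (γ : ℕ → ℝ) : (toeplitz n γ).IsSymm :=
  IsSymm.ext fun i j => by simp only [toeplitz, of_apply, max_comm, min_comm]

theorem toeplitz_rev_rev (n : ℕ) (γ : ℕ → ℝ) (i j : Fin n) :
    toeplitz n γ i.rev j.rev = toeplitz n γ i j := by
  simp only [toeplitz, of_apply, Fin.val_rev]
  congr 2
  have := i.2; have := j.2
  simp only [max_def, min_def]
  split_ifs <;> omega

theorem toeplitz_apply_nonneg {n : ℕ} {γ : ℕ → ℝ} (hγ : ∀ k, 0 ≤ γ k) (i j : Fin n) :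
    0 ≤ toeplitz n γ i j :=
  hγ _

noncomputable def hnsSeq (n i : ℕ) : ℝ :=
  if 1 ≤ i ∧ i ≤ n / 2 then 1 / (π * i) else 0

theorem hnsSeq_nonneg (n i : ℕ) : 0 ≤ hnsSeq n i := by
  unfold hnsSeq
  split_ifs <;> positivity

noncomputable def hnsWeight (n : ℕ) (i : Fin n) : ℝ :=
  1 / √((min (i : ℕ) (i.rev : ℕ) : ℕ) + 1 / 2)

theorem hnsWeight_pos (n : ℕ) (i : Fin n) : 0 < hnsWeight n i := by
  unfold hnsWeight
  positivity

theorem hnsWeight_rev (n : ℕ) (i : Fin n) : hnsWeight n i.rev = hnsWeight n i := by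
  simp only [hnsWeight, Fin.rev_rev, min_comm]

theorem toeplitz_hnsSeq_mul_hnsWeight_le {n : ℕ} {i : Fin n} (hi : 2 * (i : ℕ) + 1 ≤ n)
    (j : Fin n) :
    toeplitz n (hnsSeq n) i j * hnsWeight n j
      ≤ π⁻¹ * (1 / ((i + 1 / 2 + ((j.rev : ℕ) + 1 / 2)) * √((j.rev : ℕ) + 1 / 2))) := by
  simp only [toeplitz, of_apply, hnsSeq]
  split_ifs with h
  · obtain ⟨hm, hw⟩ : n - (max (i : ℕ) j - min (i : ℕ) j) = i + j.rev + 1 ∧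
        min (j : ℕ) j.rev = j.rev := by
      have := j.2
      simp only [max_def, min_def, Fin.val_rev]
      split_ifs at h ⊢ <;> omega
    rw [hnsWeight, hm, hw]
    push_cast
    apply le_of_eq
    field_simp
    ring
  · rw [zero_mul]
    positivity

theorem sum_toeplitz_hnsSeq_mul_hnsWeight_le {n : ℕ} (i : Fin n) :
    ∑ j, toeplitz n (hnsSeq n) i j * hnsWeight n j ≤ hnsWeight n i := by
  wlog hi : 2 * (i : ℕ) + 1 ≤ n generalizing i
  · have hrev : 2 * (i.rev : ℕ) + 1 ≤ n := by rw [Fin.val_rev]; omega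
    calc ∑ j, toeplitz n (hnsSeq n) i j * hnsWeight n j
        = ∑ j, toeplitz n (hnsSeq n) i.rev j * hnsWeight n j := by
          rw [← Equiv.sum_comp Fin.revPerm]
          simp only [Fin.revPerm_apply, hnsWeight_rev, ← toeplitz_rev_rev n _ i.rev, Fin.rev_rev]
      _ ≤ hnsWeight n i := hnsWeight_rev n i ▸ this i.rev hrev
  have hmin : min (i : ℕ) i.rev = i := by rw [Fin.val_rev]; omega
  have ha : (0 : ℝ) < i + 1 / 2 := by positivity
  calc ∑ j, toeplitz n (hnsSeq n) i j * hnsWeight n j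
      ≤ ∑ j : Fin n, π⁻¹ * (1 / ((i + 1 / 2 + ((j.rev : ℕ) + 1 / 2)) * √((j.rev : ℕ) + 1 / 2))) :=
        sum_le_sum fun j _ => toeplitz_hnsSeq_mul_hnsWeight_le hi j
    _ = π⁻¹ * ∑ k ∈ range n, 1 / ((i + 1 / 2 + (k + 1 / 2)) * √(k + 1 / 2)) := by
        rw [← mul_sum, ← Equiv.sum_comp Fin.revPerm]
        simp only [Fin.revPerm_apply, Fin.rev_rev]
        rw [Fin.sum_univ_eq_sum_range (fun k : ℕ => 1 / ((i + 1 / 2 + (k + 1 / 2)) * √(k + 1 / 2)))]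
    _ ≤ π⁻¹ * (π / √(i + 1 / 2)) := by
        gcongr
        exact sum_range_one_div_add_mul_sqrt_le ha n
    _ = hnsWeight n i := by
        rw [hnsWeight, hmin]
        field_simp

theorem sNorm_toeplitz_hnsSeq_le_one (n : ℕ) : sNorm (toeplitz n (hnsSeq n)) ≤ 1 :=
  norm_toEuclideanCLM_le_of_schur (toeplitz_isSymm n _) (toeplitz_apply_nonneg (hnsSeq_nonneg n))
    (hnsWeight_pos n) zero_le_one fun i =>
      (one_mul (hnsWeight n i)).symm ▸ sum_toeplitz_hnsSeq_mul_hnsWeight_le i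

theorem hnsSeq_objective_eq (n : ℕ) :
    hnsSeq n n + 2 * ∑ i ∈ Icc 1 (n - 1), hnsSeq n i = 2 / π * ∑ i ∈ Icc 1 (n / 2), (1 : ℝ) / i := by
  have hn : hnsSeq n n = 0 := if_neg (by omega)
  have hsupp : ∑ i ∈ Icc 1 (n - 1), hnsSeq n i = ∑ i ∈ Icc 1 (n / 2), 1 / (π * i) := by
    have hsub : Icc 1 (n / 2) ⊆ Icc 1 (n - 1) := Icc_subset_Icc le_rfl (by omega)
    simp only [hnsSeq, ← mem_Icc, sum_ite_mem, inter_eq_right.2 hsub]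
  rw [hn, hsupp, zero_add, mul_sum, mul_sum]
  refine sum_congr rfl fun i _ => ?_
  field_simp

theorem hns_feasible_general (n : ℕ) :
    let γ : ℕ → ℝ := fun i => if 1 ≤ i ∧ i ≤ n / 2 then 1 / (Real.pi * i) else 0
    sNorm (toeplitz n γ) ≤ 1 ∧
    γ n + 2 * ∑ i ∈ Finset.Icc 1 (n - 1), γ i
      = (2 / Real.pi) * ∑ i ∈ Finset.Icc 1 (n / 2), (1 : ℝ) / i :=
  ⟨sNorm_toeplitz_hnsSeq_le_one n, hnsSeq_objective_eq n⟩

/-- Høyer–Neerbek–Shi weight scheme feasibility: for `n ≥ 2`, taking `γ_i = 1/(π i)` for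
`1 ≤ i ≤ ⌊n/2⌋` and `γ_i = 0` for `⌊n/2⌋ < i ≤ n`, the spectral norm of
`Toeplitz(γ_n, …, γ_1)` is at most `1`; consequently the adversary objective
`γ_n + 2 ∑_{i=1}^{n−1} γ_i` attains the value `(2/π) ∑_{i=1}^{⌊n/2⌋} 1/i` under the
constraint that this spectral norm be at most `1`. -/
theorem hns_feasible (n : ℕ) (hn : 2 ≤ n) :
    let γ : ℕ → ℝ := fun i => if 1 ≤ i ∧ i ≤ n / 2 then 1 / (Real.pi * i) else 0
    sNorm (toeplitz n γ) ≤ 1 ∧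
    γ n + 2 * ∑ i ∈ Finset.Icc 1 (n - 1), γ i
      = (2 / Real.pi) * ∑ i ∈ Finset.Icc 1 (n / 2), (1 : ℝ) / i :=
  hns_feasible_general n
end
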